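/- arXiv:1705.02837 — 9 statements merged into one kernel-verified Lean document; each statement's English description precedes it below -/
import Mathlib

section
/- Let φ₀ be a norm on ℝ^m and define φ(B) = Σᵢ φ₀(bᵢ) for a matrix B with columns bᵢ. Let X ∈ ℝ^{n×N} have rank n and let d be a nonnegative integer. Suppose that for every A ∈ ℝ^{m×n} and every Y ∈ ℝ^{m×N} with #{t ∈ {1,…,N} : y_t ≠ A x_t} ≤ d, the matrix A is the unique minimizer of H ↦ φ(Y − HX) over ℝ^{m×n} (i.e., φ(Y − AX) < φ(Y − HX) for every H ≠ A). Then for every index set Iᶜ ⊆ {1,…,N} with |Iᶜ| = d and every nonzero Λ ∈ ℝ^{m×n}, one has 2·φ(ΛX_{Iᶜ}) < φ(ΛX). -/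
theorem statement0 {m n N : ℕ} (φ₀ : Seminorm ℝ (Fin m → ℝ))
    (hφdef : ∀ v : Fin m → ℝ, φ₀ v = 0 → v = 0)
    (X : Matrix (Fin n) (Fin N) ℝ) (hX : X.rank = n) (d : ℕ)
    (hrec : ∀ (A : Matrix (Fin m) (Fin n) ℝ) (Y : Matrix (Fin m) (Fin N) ℝ),
      {t : Fin N | (fun i => Y i t) ≠ (fun i => (A * X) i t)}.ncard ≤ d →
      ∀ H : Matrix (Fin m) (Fin n) ℝ, H ≠ A →
        ∑ t : Fin N, φ₀ (fun i => (Y - A * X) i t) <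
          ∑ t : Fin N, φ₀ (fun i => (Y - H * X) i t)) :
    ∀ Ic : Finset (Fin N), Ic.card = d →
      ∀ Λ : Matrix (Fin m) (Fin n) ℝ, Λ ≠ 0 →
        2 * ∑ t ∈ Ic, φ₀ (fun i => (Λ * X) i t) <
          ∑ t : Fin N, φ₀ (fun i => (Λ * X) i t) := by
  intro Ic hIc Λ hΛ
  set Y : Matrix (Fin m) (Fin N) ℝ :=
    fun i t => if t ∈ Ic then (Λ * X) i t else 0 with hY
  have hcard : {t : Fin N |
      (fun i => Y i t) ≠ (fun i => ((0 : Matrix (Fin m) (Fin n) ℝ) * X) i t)}.ncard ≤ d := by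
    have hsub : {t : Fin N |
        (fun i => Y i t) ≠ (fun i => ((0 : Matrix (Fin m) (Fin n) ℝ) * X) i t)}
        ⊆ (↑Ic : Set (Fin N)) := by
      intro t ht
      by_contra h
      have h' : t ∉ Ic := by simpa using h
      apply ht
      funext i
      simp [hY, h', Matrix.zero_mul]
    calc _ ≤ (↑Ic : Set (Fin N)).ncard := Set.ncard_le_ncard hsub (Ic.finite_toSet)
    _ = Ic.card := Set.ncard_coe_finset Ic
    _ = d := hIc
  have key := hrec 0 Y hcard Λ hΛ
  have hL : ∑ t : Fin N, φ₀ (fun i => (Y - (0 : Matrix (Fin m) (Fin n) ℝ) * X) i t)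
      = ∑ t ∈ Ic, φ₀ (fun i => (Λ * X) i t) := by
    have hpt : ∀ t : Fin N, φ₀ (fun i => (Y - (0 : Matrix (Fin m) (Fin n) ℝ) * X) i t)
        = if t ∈ Ic then φ₀ (fun i => (Λ * X) i t) else 0 := by
      intro t
      by_cases ht : t ∈ Ic
      · rw [if_pos ht]
        congr 1
        funext i
        simp only [Matrix.sub_apply]
        simp [hY, ht]
      · rw [if_neg ht]
        have : (fun i => (Y - (0 : Matrix (Fin m) (Fin n) ℝ) * X) i t) = (0 : Fin m → ℝ) := by
          funext i
          simp only [Matrix.sub_apply]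
          simp [hY, ht]
        rw [this, map_zero]
    rw [Finset.sum_congr rfl fun t _ => hpt t, Finset.sum_ite_mem, Finset.univ_inter]
  have hR : ∑ t : Fin N, φ₀ (fun i => (Y - Λ * X) i t)
      = ∑ t ∈ Icᶜ, φ₀ (fun i => (Λ * X) i t) := by
    have hpt : ∀ t : Fin N, φ₀ (fun i => (Y - Λ * X) i t)
        = if t ∈ Icᶜ then φ₀ (fun i => (Λ * X) i t) else 0 := by
      intro t
      by_cases ht : t ∈ Ic
      · rw [if_neg (by simpa using ht)]
        have : (fun i => (Y - Λ * X) i t) = (0 : Fin m → ℝ) := by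
          funext i
          simp only [Matrix.sub_apply]
          simp [hY, ht]
        rw [this, map_zero]
      · rw [if_pos (Finset.mem_compl.mpr ht)]
        have : (fun i => (Y - Λ * X) i t) = -(fun i => (Λ * X) i t) := by
          funext i
          simp only [Matrix.sub_apply]
          simp [hY, ht]
        rw [this, map_neg_eq_map]
    rw [Finset.sum_congr rfl fun t _ => hpt t, Finset.sum_ite_mem, Finset.univ_inter]
  rw [hL, hR] at key
  have htot : ∑ t ∈ Ic, φ₀ (fun i => (Λ * X) i t)
      + ∑ t ∈ Icᶜ, φ₀ (fun i => (Λ * X) i t)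
      = ∑ t : Fin N, φ₀ (fun i => (Λ * X) i t) :=
    Finset.sum_add_sum_compl Ic _
  linarith
end

section
/- Let φ₀ be a norm on ℝ^m and define φ(B) = Σᵢ φ₀(bᵢ) for a matrix B with columns bᵢ. Let X ∈ ℝ^{n×N} have rank n and let d be a nonnegative integer. Suppose that for every index set Iᶜ ⊆ {1,…,N} with |Iᶜ| ≤ d and every nonzero Λ ∈ ℝ^{m×n}, one has 2·φ(ΛX_{Iᶜ}) < φ(ΛX). Then for every A ∈ ℝ^{m×n} and every Y ∈ ℝ^{m×N} with #{t ∈ {1,…,N} : y_t ≠ A x_t} ≤ d, the matrix A is the unique minimizer of H ↦ φ(Y − HX) over ℝ^{m×n}, i.e., φ(Y − AX) < φ(Y − HX) for every H ≠ A. -/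
theorem statement1 {m n N : ℕ} (φ₀ : Seminorm ℝ (Fin m → ℝ))
    (hφdef : ∀ v : Fin m → ℝ, φ₀ v = 0 → v = 0)
    (X : Matrix (Fin n) (Fin N) ℝ) (hX : X.rank = n) (d : ℕ)
    (hcond : ∀ Ic : Finset (Fin N), Ic.card ≤ d →
      ∀ Λ : Matrix (Fin m) (Fin n) ℝ, Λ ≠ 0 →
        2 * ∑ t ∈ Ic, φ₀ (fun i => (Λ * X) i t) <
          ∑ t : Fin N, φ₀ (fun i => (Λ * X) i t)) :
    ∀ (A : Matrix (Fin m) (Fin n) ℝ) (Y : Matrix (Fin m) (Fin N) ℝ),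
      {t : Fin N | (fun i => Y i t) ≠ (fun i => (A * X) i t)}.ncard ≤ d →
      ∀ H : Matrix (Fin m) (Fin n) ℝ, H ≠ A →
        ∑ t : Fin N, φ₀ (fun i => (Y - A * X) i t) <
          ∑ t : Fin N, φ₀ (fun i => (Y - H * X) i t) := by
  classical
  intro A Y hY H hH
  set Λ : Matrix (Fin m) (Fin n) ℝ := A - H with hΛdef
  have hΛ : Λ ≠ 0 := sub_ne_zero.mpr (Ne.symm hH)
  set I : Finset (Fin N) :=
    Finset.univ.filter (fun t => (fun i => Y i t) ≠ (fun i => (A * X) i t)) with hIdef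
  have hIcard : I.card ≤ d := by
    have : {t : Fin N | (fun i => Y i t) ≠ (fun i => (A * X) i t)}.ncard = I.card := by
      rw [Set.ncard_eq_toFinset_card']
      congr 1
      ext t
      simp [hIdef]
    omega
  have key := hcond I hIcard Λ hΛ
  -- columns outside I agree
  have hcol : ∀ t ∉ I, (fun i => Y i t) = (fun i => (A * X) i t) := by
    intro t ht
    by_contra h
    exact ht (by simp [hIdef, h])
  -- residual at A is zero outside I
  have hS1 : ∑ t : Fin N, φ₀ (fun i => (Y - A * X) i t)
      = ∑ t ∈ I, φ₀ (fun i => (Y - A * X) i t) := by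
    rw [← Finset.sum_filter_add_sum_filter_not Finset.univ
      (fun t => (fun i => Y i t) ≠ (fun i => (A * X) i t))]
    have : ∑ t ∈ Finset.univ.filter
        (fun t => ¬ (fun i => Y i t) ≠ (fun i => (A * X) i t)),
        φ₀ (fun i => (Y - A * X) i t) = 0 := by
      apply Finset.sum_eq_zero
      intro t ht
      simp only [Finset.mem_filter, not_not] at ht
      have : (fun i => (Y - A * X) i t) = 0 := by
        funext i
        have := congrFun ht.2 i
        simp [Matrix.sub_apply, this]
      rw [this, map_zero]
    rw [this, add_zero]
  -- outside I, residual at H equals Λ X column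
  have hS2 : ∀ t ∈ Finset.univ \ I,
      φ₀ (fun i => (Y - H * X) i t) = φ₀ (fun i => (Λ * X) i t) := by
    intro t ht
    have ht' : t ∉ I := (Finset.mem_sdiff.mp ht).2
    have hc := hcol t ht'
    congr 1
    funext i
    have hYi := congrFun hc i
    simp only [Matrix.sub_apply, hYi, hΛdef, Matrix.sub_mul]
  -- triangle inequality on I
  have hS3 : ∀ t : Fin N,
      φ₀ (fun i => (Y - A * X) i t)
        ≤ φ₀ (fun i => (Y - H * X) i t) + φ₀ (fun i => (Λ * X) i t) := by
    intro t
    have heq : (fun i => (Y - A * X) i t)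
        = (fun i => (Y - H * X) i t) - (fun i => (Λ * X) i t) := by
      funext i
      simp only [Pi.sub_apply, Matrix.sub_apply, hΛdef, Matrix.sub_mul]
      ring
    rw [heq]
    exact map_sub_le_add φ₀ _ _
  -- split the sums over I and its complement
  have hsplitH : ∑ t : Fin N, φ₀ (fun i => (Y - H * X) i t)
      = ∑ t ∈ I, φ₀ (fun i => (Y - H * X) i t)
        + ∑ t ∈ Finset.univ \ I, φ₀ (fun i => (Y - H * X) i t) := by
    rw [add_comm, Finset.sum_sdiff (Finset.subset_univ I)]
  have hsplitΛ : ∑ t : Fin N, φ₀ (fun i => (Λ * X) i t)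
      = ∑ t ∈ I, φ₀ (fun i => (Λ * X) i t)
        + ∑ t ∈ Finset.univ \ I, φ₀ (fun i => (Λ * X) i t) := by
    rw [add_comm, Finset.sum_sdiff (Finset.subset_univ I)]
  have hS2sum : ∑ t ∈ Finset.univ \ I, φ₀ (fun i => (Y - H * X) i t)
      = ∑ t ∈ Finset.univ \ I, φ₀ (fun i => (Λ * X) i t) :=
    Finset.sum_congr rfl hS2
  have hS3sum : ∑ t ∈ I, φ₀ (fun i => (Y - A * X) i t)
      ≤ ∑ t ∈ I, φ₀ (fun i => (Y - H * X) i t)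
        + ∑ t ∈ I, φ₀ (fun i => (Λ * X) i t) := by
    rw [← Finset.sum_add_distrib]
    exact Finset.sum_le_sum fun t _ => hS3 t
  linarith
end

section
/- Let φ₀ be a norm on ℝ^m and define φ(B) = Σᵢ φ₀(bᵢ) for a matrix B with columns bᵢ. Assume X ∈ ℝ^{n×N} is self-decomposable. Then for every A ∈ ℝ^{m×n} and every Y ∈ ℝ^{m×N} satisfying #{t ∈ {1,…,N} : y_t ≠ A x_t} < T(ξ(X)), the matrix A is the unique minimizer of H ↦ φ(Y − HX) over ℝ^{m×n}, i.e., φ(Y − AX) < φ(Y − HX) for every H ≠ A. -/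
/-- A matrix `X ∈ ℝ^{n×N}` is self-decomposable if it has full row rank `n` and
each of its columns lies in the span of the other columns. -/
def SelfDecomposable {n N : ℕ} (X : Matrix (Fin n) (Fin N) ℝ) : Prop :=
  X.rank = n ∧ ∀ k : Fin N, ∃ γ : Fin N → ℝ, γ k = 0 ∧
    ∀ i, X i k = ∑ t : Fin N, γ t * X i t

/-- The self-decomposability amplitude `ξ(X)`. -/
noncomputable def xi {n N : ℕ} (X : Matrix (Fin n) (Fin N) ℝ) : ℝ :=
  ⨆ k : Fin N, sInf {c : ℝ | ∃ γ : Fin N → ℝ, γ k = 0 ∧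
    (∀ i, X i k = ∑ t : Fin N, γ t * X i t) ∧ c = ⨆ t : Fin N, |γ t|}

/-- `T(α) = (1/2)(1 + 1/α)`. -/
noncomputable def Tfun (α : ℝ) : ℝ := (1 / 2) * (1 + 1 / α)

lemma snsum {ι E : Type*} [AddCommGroup E] [Module ℝ E] (p : Seminorm ℝ E)
    (s : Finset ι) (f : ι → E) : p (∑ i ∈ s, f i) ≤ ∑ i ∈ s, p (f i) := by
  classical
  induction s using Finset.cons_induction with
  | empty => simp
  | cons a s ha ih =>
    simp only [Finset.sum_cons]
    exact le_trans (map_add_le_add p _ _) (by linarith)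

theorem statement2 {m n N : ℕ} (φ₀ : Seminorm ℝ (Fin m → ℝ))
    (hφdef : ∀ v : Fin m → ℝ, φ₀ v = 0 → v = 0)
    (X : Matrix (Fin n) (Fin N) ℝ) (hX : SelfDecomposable X)
    (A : Matrix (Fin m) (Fin n) ℝ) (Y : Matrix (Fin m) (Fin N) ℝ)
    (hcard : (({t : Fin N | (fun i => Y i t) ≠ (fun i => (A * X) i t)}.ncard : ℝ)) <
      Tfun (xi X)) :
    ∀ H : Matrix (Fin m) (Fin n) ℝ, H ≠ A →
      ∑ t : Fin N, φ₀ (fun i => (Y - A * X) i t) <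
        ∑ t : Fin N, φ₀ (fun i => (Y - H * X) i t) := by
  classical
  intro H hH
  obtain ⟨hrank, hsd⟩ := hX
  set D : Matrix (Fin m) (Fin n) ℝ := A - H with hD
  have hDne : D ≠ 0 := sub_ne_zero.mpr (Ne.symm hH)
  -- full row rank ⇒ mulVec surjective
  have hsurj : Function.Surjective X.mulVecLin := by
    rw [← LinearMap.range_eq_top]
    apply Submodule.eq_top_of_finrank_eq
    rw [Module.finrank_fin_fun]
    exact hrank
  have hvm : ∀ d : Fin n → ℝ, d ≠ 0 → Matrix.vecMul d X ≠ 0 := by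
    intro d hdne hd
    apply hdne
    funext j
    obtain ⟨v, hv⟩ := hsurj (Pi.single j 1)
    rw [Matrix.mulVecLin_apply] at hv
    have h1 : dotProduct d (X.mulVec v) = dotProduct (Matrix.vecMul d X) v :=
      Matrix.dotProduct_mulVec d X v
    rw [hv, hd] at h1
    simpa [dotProduct, Pi.single_apply, mul_ite] using h1
  -- a nonzero column of D * X
  set Z : Fin N → (Fin m → ℝ) := fun t i => (D * X) i t with hZdef
  set E : Fin N → (Fin m → ℝ) := fun t i => (Y - A * X) i t with hEdef
  obtain ⟨j0, hj0⟩ : ∃ j, D j ≠ 0 := by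
    by_contra hco
    push_neg at hco
    exact hDne (Matrix.ext fun j l => by rw [congrFun (hco j) l]; rfl)
  obtain ⟨k0, hk0⟩ : ∃ k, Matrix.vecMul (D j0) X k ≠ 0 := by
    by_contra hco
    push_neg at hco
    exact hvm (D j0) hj0 (funext fun k => hco k)
  have hZk0 : Z k0 ≠ 0 := by
    intro h
    apply hk0
    have := congrFun h j0
    simpa [hZdef, Matrix.mul_apply, Matrix.vecMul, dotProduct] using this
  set Sm : ℝ := ∑ t : Fin N, φ₀ (Z t) with hSm
  set ξ : ℝ := xi X with hξ
  -- column relation transfers to Z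
  have hcol : ∀ (k : Fin N) (γ : Fin N → ℝ), (∀ i, X i k = ∑ t, γ t * X i t) →
      Z k = ∑ t : Fin N, γ t • Z t := by
    intro k γ hγ
    funext i
    rw [Finset.sum_apply]
    simp only [Pi.smul_apply, smul_eq_mul, hZdef, Matrix.mul_apply]
    calc ∑ l, D i l * X l k
        = ∑ l, ∑ t, D i l * (γ t * X l t) := by
          refine Finset.sum_congr rfl fun l _ => ?_
          rw [hγ l, Finset.mul_sum]
      _ = ∑ t, ∑ l, D i l * (γ t * X l t) := Finset.sum_comm
      _ = ∑ t, γ t * ∑ l, D i l * X l t := by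
          refine Finset.sum_congr rfl fun t _ => ?_
          rw [Finset.mul_sum]
          exact Finset.sum_congr rfl fun l _ => by ring
  -- properties of the amplitude
  set SS : Fin N → Set ℝ := fun k => {c : ℝ | ∃ γ : Fin N → ℝ, γ k = 0 ∧
    (∀ i, X i k = ∑ t : Fin N, γ t * X i t) ∧ c = ⨆ t : Fin N, |γ t|} with hSS
  have hξ2 : ξ = ⨆ k : Fin N, sInf (SS k) := rfl
  have hSSne : ∀ k, (SS k).Nonempty := by
    intro k
    obtain ⟨γ, h1, h2⟩ := hsd k
    exact ⟨_, γ, h1, h2, rfl⟩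
  have hSSnn : ∀ k, ∀ c ∈ SS k, 0 ≤ c := by
    rintro k c ⟨γ, -, -, rfl⟩
    exact Real.iSup_nonneg fun t => abs_nonneg _
  have hInfle : ∀ k, sInf (SS k) ≤ ξ := by
    intro k
    rw [hξ2]
    exact le_ciSup (f := fun k : Fin N => sInf (SS k)) (Set.Finite.bddAbove (Set.finite_range _)) k
  have hxinn : 0 ≤ ξ := by
    rw [hξ2]
    exact Real.iSup_nonneg fun k => le_csInf (hSSne k) (hSSnn k)
  -- key ε-inequality
  have hkey : ∀ k : Fin N, ∀ ε : ℝ, 0 < ε → φ₀ (Z k) ≤ (ξ + ε) * (Sm - φ₀ (Z k)) := by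
    intro k ε hε
    have h1 : sInf (SS k) < ξ + ε := lt_of_le_of_lt (hInfle k) (by linarith)
    obtain ⟨c, hc, hclt⟩ := exists_lt_of_csInf_lt (hSSne k) h1
    obtain ⟨γ, hγk, hγeq, rfl⟩ := hc
    have hγb : ∀ t, |γ t| ≤ ξ + ε := fun t =>
      le_trans (le_ciSup (f := fun t : Fin N => |γ t|) (Set.Finite.bddAbove (Set.finite_range _)) t) hclt.le
    have hZk := hcol k γ hγeq
    have hsub : ∑ t ∈ Finset.univ.erase k, φ₀ (Z t) = Sm - φ₀ (Z k) := by
      have h2 := Finset.sum_erase_add Finset.univ (fun t => φ₀ (Z t)) (Finset.mem_univ k)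
      rw [hSm]
      linarith
    calc φ₀ (Z k) = φ₀ (∑ t : Fin N, γ t • Z t) := by rw [hZk]
      _ ≤ ∑ t : Fin N, φ₀ (γ t • Z t) := snsum φ₀ _ _
      _ = ∑ t : Fin N, |γ t| * φ₀ (Z t) := by
          refine Finset.sum_congr rfl fun t _ => ?_
          rw [map_smul_eq_mul, Real.norm_eq_abs]
      _ = ∑ t ∈ Finset.univ.erase k, |γ t| * φ₀ (Z t) := by
          rw [← Finset.sum_erase_add Finset.univ _ (Finset.mem_univ k), hγk]
          simp
      _ ≤ ∑ t ∈ Finset.univ.erase k, (ξ + ε) * φ₀ (Z t) :=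
          Finset.sum_le_sum fun t _ => mul_le_mul_of_nonneg_right (hγb t) (apply_nonneg φ₀ _)
      _ = (ξ + ε) * ∑ t ∈ Finset.univ.erase k, φ₀ (Z t) := by rw [Finset.mul_sum]
      _ = (ξ + ε) * (Sm - φ₀ (Z k)) := by rw [hsub]
  have hble : ∀ k, φ₀ (Z k) ≤ Sm := by
    intro k
    rw [hSm]
    exact Finset.single_le_sum (f := fun t => φ₀ (Z t))
      (fun t _ => apply_nonneg _ _) (Finset.mem_univ k)
  -- pass to the limit ε → 0
  have hkey2 : ∀ k, (1 + ξ) * φ₀ (Z k) ≤ ξ * Sm := by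
    intro k
    have h3 : φ₀ (Z k) ≤ ξ * (Sm - φ₀ (Z k)) := by
      refine le_of_forall_pos_le_add fun δ hδ => ?_
      have hRnn : 0 ≤ Sm - φ₀ (Z k) := by linarith [hble k]
      have hSm1 : (0 : ℝ) < Sm - φ₀ (Z k) + 1 := by linarith
      have hε : 0 < δ / (Sm - φ₀ (Z k) + 1) := div_pos hδ hSm1
      have h4 := hkey k _ hε
      have hdiv : δ / (Sm - φ₀ (Z k) + 1) * (Sm - φ₀ (Z k)) ≤ δ := by
        rw [div_mul_eq_mul_div, div_le_iff₀ hSm1]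
        nlinarith
      nlinarith
    nlinarith [h3]
  have hSmpos : 0 < Sm := by
    have hne : φ₀ (Z k0) ≠ 0 := fun h => hZk0 (hφdef _ h)
    have := lt_of_le_of_ne (apply_nonneg φ₀ (Z k0)) (Ne.symm hne)
    linarith [hble k0, this, Finset.single_le_sum (f := fun t => φ₀ (Z t))
      (fun t _ => apply_nonneg _ _) (Finset.mem_univ k0)]
  have hξpos : 0 < ξ := by
    rcases eq_or_lt_of_le hxinn with h | h
    · exfalso
      have h1 := hkey2 k0
      rw [← h] at h1
      have hne : φ₀ (Z k0) ≠ 0 := fun h => hZk0 (hφdef _ h)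
      have h2 := lt_of_le_of_ne (apply_nonneg φ₀ (Z k0)) (Ne.symm hne)
      nlinarith
    · exact h
  have percol : ∀ k, φ₀ (Z k) ≤ ξ / (1 + ξ) * Sm := by
    intro k
    rw [div_mul_eq_mul_div, le_div_iff₀ (by linarith)]
    nlinarith [hkey2 k]
  -- the corrupted set
  set Sf : Finset (Fin N) :=
    {t : Fin N | (fun i => Y i t) ≠ (fun i => (A * X) i t)}.toFinset with hSf
  have hcard' : (Sf.card : ℝ) < Tfun ξ := by
    rw [hSf, ← Set.ncard_eq_toFinset_card']
    exact hcard
  have hEoff : ∀ t ∉ Sf, E t = 0 := by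
    intro t ht
    rw [hSf, Set.mem_toFinset] at ht
    simp only [Set.mem_setOf_eq, not_not] at ht
    funext i
    have := congrFun ht i
    simp only [hEdef, Matrix.sub_apply, Pi.zero_apply]
    linarith [this]
  have hsum_S : ∑ t ∈ Sf, φ₀ (Z t) < Sm / 2 := by
    have h1 : ∑ t ∈ Sf, φ₀ (Z t) ≤ (Sf.card : ℝ) * (ξ / (1 + ξ) * Sm) := by
      calc ∑ t ∈ Sf, φ₀ (Z t) ≤ ∑ _t ∈ Sf, ξ / (1 + ξ) * Sm :=
            Finset.sum_le_sum fun t _ => percol t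
        _ = Sf.card * (ξ / (1 + ξ) * Sm) := by rw [Finset.sum_const, nsmul_eq_mul]
    have hpos : 0 < ξ / (1 + ξ) * Sm :=
      mul_pos (div_pos hξpos (by linarith)) hSmpos
    have h2 : (Sf.card : ℝ) * (ξ / (1 + ξ) * Sm) < Tfun ξ * (ξ / (1 + ξ) * Sm) :=
      mul_lt_mul_of_pos_right hcard' hpos
    have hne : ξ ≠ 0 := ne_of_gt hξpos
    have hne2 : (1 : ℝ) + ξ ≠ 0 := by positivity
    have h3 : Tfun ξ * (ξ / (1 + ξ) * Sm) = Sm / 2 := by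
      rw [Tfun]
      field_simp
      ring
    linarith
  -- assemble
  have hcolHX : ∀ t, (fun i => (Y - H * X) i t) = E t + Z t := by
    intro t
    funext i
    simp only [hEdef, hZdef, hD, Pi.add_apply, Matrix.sub_apply, Matrix.sub_mul]
    ring
  have htri : ∀ t, φ₀ (E t) - φ₀ (Z t) ≤ φ₀ (E t + Z t) := by
    intro t
    have h := map_add_le_add φ₀ (E t + Z t) (-(Z t))
    rw [add_neg_cancel_right, map_neg_eq_map] at h
    linarith
  have hgoal1 : (∑ t : Fin N, φ₀ fun i => (Y - A * X) i t) = ∑ t ∈ Sf, φ₀ (E t) := by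
    rw [show (∑ t : Fin N, φ₀ fun i => (Y - A * X) i t) = ∑ t : Fin N, φ₀ (E t) from rfl]
    exact (Finset.sum_subset (Finset.subset_univ Sf)
      (fun t _ ht => by rw [hEoff t ht, map_zero])).symm
  have hgoal2 : (∑ t : Fin N, φ₀ fun i => (Y - H * X) i t) = ∑ t : Fin N, φ₀ (E t + Z t) :=
    Finset.sum_congr rfl fun t _ => by rw [hcolHX t]
  rw [hgoal1, hgoal2]
  have hs1 := Finset.sum_add_sum_compl Sf (fun t => φ₀ (E t + Z t))
  have hs2 : ∑ t ∈ Sf, φ₀ (Z t) + ∑ t ∈ Sfᶜ, φ₀ (Z t) = Sm :=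
    Finset.sum_add_sum_compl Sf (fun t => φ₀ (Z t))
  have hs3 : ∑ t ∈ Sfᶜ, φ₀ (E t + Z t) = ∑ t ∈ Sfᶜ, φ₀ (Z t) :=
    Finset.sum_congr rfl fun t ht => by rw [hEoff t (Finset.mem_compl.mp ht), zero_add]
  have hs4 : ∑ t ∈ Sf, (φ₀ (E t) - φ₀ (Z t)) ≤ ∑ t ∈ Sf, φ₀ (E t + Z t) :=
    Finset.sum_le_sum fun t _ => htri t
  rw [Finset.sum_sub_distrib] at hs4
  linarith
end

section
/- Let (φ₀, ℓ₀, ε) be as in the context, and define φ(B_I) = Σ_{i∈I} φ₀(bᵢ) and ℓ(B_I) = Σ_{i∈I} ℓ₀(bᵢ) for index sets I. Let A ∈ ℝ^{m×n}, Y ∈ ℝ^{m×N}, X ∈ ℝ^{n×N}, and set Iᶜ = {t ∈ {1,…,N} : y_t ≠ A x_t} and I⁰ = {1,…,N} \ Iᶜ. If for every nonzero Λ ∈ ℝ^{m×n} one has ε·#{t ∈ I⁰ : ℓ₀(Λ x_t) > ε} < Σ_{t∈I⁰} ℓ₀(Λ x_t) − Σ_{t∈Iᶜ} ℓ₀(Λ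 x_t), then A is the unique minimizer of H ↦ φ(Y − HX) over ℝ^{m×n}, i.e., φ(Y − AX) < φ(Y − HX) for every H ≠ A. -/
theorem statement3 {m n N : ℕ} (ℓ₀ : Seminorm ℝ (Fin m → ℝ))
    (hℓdef : ∀ v : Fin m → ℝ, ℓ₀ v = 0 → v = 0)
    (ε : ℝ) (hε : 0 ≤ ε) (φ₀ : (Fin m → ℝ) → ℝ)
    (hconv : ConvexOn ℝ Set.univ φ₀) (hpos : ∀ b, 0 ≤ φ₀ b)
    (hP2 : ∀ b c : Fin m → ℝ, φ₀ b ≤ φ₀ (b - c) + ℓ₀ c)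
    (hP3 : ∀ (k : ℕ) (b : Fin k → Fin m → ℝ),
      ((∑ i : Fin k, ℓ₀ (b i)) - ε * ({i : Fin k | ε < ℓ₀ (b i)}.ncard : ℝ) ≤
          ∑ i : Fin k, φ₀ (b i)) ∧
        ∑ i : Fin k, φ₀ (b i) ≤ ∑ i : Fin k, ℓ₀ (b i))
    (A : Matrix (Fin m) (Fin n) ℝ) (Y : Matrix (Fin m) (Fin N) ℝ)
    (X : Matrix (Fin n) (Fin N) ℝ) (Ic : Finset (Fin N))
    (hIc : ∀ t : Fin N, t ∈ Ic ↔ (fun i => Y i t) ≠ (fun i => (A * X) i t))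
    (hcond : ∀ Λ : Matrix (Fin m) (Fin n) ℝ, Λ ≠ 0 →
      ε * ({t : Fin N | t ∈ Icᶜ ∧ ε < ℓ₀ (fun i => (Λ * X) i t)}.ncard : ℝ) <
        (∑ t ∈ Icᶜ, ℓ₀ (fun i => (Λ * X) i t)) -
          ∑ t ∈ Ic, ℓ₀ (fun i => (Λ * X) i t)) :
    ∀ H : Matrix (Fin m) (Fin n) ℝ, H ≠ A →
      ∑ t : Fin N, φ₀ (fun i => (Y - A * X) i t) <
        ∑ t : Fin N, φ₀ (fun i => (Y - H * X) i t) := by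
  classical
  intro H hH
  set Λ : Matrix (Fin m) (Fin n) ℝ := A - H with hΛdef
  have hΛne : Λ ≠ 0 := sub_ne_zero.mpr (fun h => hH h.symm)
  set f : Fin N → ℝ := fun t => ℓ₀ (fun i => (Λ * X) i t) with hf
  set g : Fin N → ℝ := fun t => φ₀ (fun i => (Λ * X) i t) with hg
  -- φ₀ 0 = 0
  have hφ0 : φ₀ 0 = 0 := by
    have h := (hP3 1 (fun _ => 0)).2
    simp only [Finset.sum_const, Finset.card_univ, Fintype.card_fin, one_smul, map_zero] at h
    exact le_antisymm h (hpos 0)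
  -- columns
  have hcolA0 : ∀ t ∉ Ic, (fun i => (Y - A * X) i t) = (0 : Fin m → ℝ) := by
    intro t ht
    have := not_not.mp (fun h => ht ((hIc t).mpr h))
    funext i
    have := congrFun this i
    simp only [Matrix.sub_apply, Pi.zero_apply]
    linarith [congrFun (not_not.mp (fun h => ht ((hIc t).mpr h))) i]
  have hcolΛ : ∀ t : Fin N, (fun i => (Y - H * X) i t)
      = (fun i => (Y - A * X) i t) + (fun i => (Λ * X) i t) := by
    intro t
    funext i
    simp [Matrix.sub_apply, Matrix.sub_mul, hΛdef]
  -- hP3 lower bound transported to Icᶜ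
  have key : (∑ t ∈ Icᶜ, f t)
      - ε * (({t : Fin N | t ∈ Icᶜ ∧ ε < f t}).ncard : ℝ) ≤ ∑ t ∈ Icᶜ, g t := by
    set k := Icᶜ.card with hk
    let e : Fin k ≃ {x // x ∈ Icᶜ} := Icᶜ.equivFin.symm
    set b : Fin k → Fin m → ℝ := fun i j => (Λ * X) j ((e i : Fin N)) with hb
    have hbf : ∀ i, ℓ₀ (b i) = f ((e i : Fin N)) := fun i => rfl
    have hbg : ∀ i, φ₀ (b i) = g ((e i : Fin N)) := fun i => rfl
    have h := (hP3 k b).1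
    have hsumℓ : ∑ i : Fin k, ℓ₀ (b i) = ∑ t ∈ Icᶜ, f t := by
      rw [← Finset.sum_coe_sort Icᶜ f, ← Equiv.sum_comp e (fun x : {x // x ∈ Icᶜ} => f x)]
    have hsumφ : ∑ i : Fin k, φ₀ (b i) = ∑ t ∈ Icᶜ, g t := by
      rw [← Finset.sum_coe_sort Icᶜ g, ← Equiv.sum_comp e (fun x : {x // x ∈ Icᶜ} => g x)]
    have hcard : ({i : Fin k | ε < ℓ₀ (b i)}).ncard
        = ({t : Fin N | t ∈ Icᶜ ∧ ε < f t}).ncard := by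
      have hFinj : Function.Injective (fun i : Fin k => (e i : Fin N)) :=
        Subtype.val_injective.comp e.injective
      have himg : (fun i : Fin k => (e i : Fin N)) '' {i : Fin k | ε < ℓ₀ (b i)}
          = {t : Fin N | t ∈ Icᶜ ∧ ε < f t} := by
        ext t
        constructor
        · rintro ⟨i, hi, rfl⟩
          exact ⟨(e i).2, hi⟩
        · rintro ⟨ht, hε'⟩
          refine ⟨e.symm ⟨t, ht⟩, ?_, ?_⟩
          · show ε < f ((e (e.symm ⟨t, ht⟩) : Fin N))
            rw [Equiv.apply_symm_apply]
            exact hε'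
          · exact congrArg Subtype.val (e.apply_symm_apply ⟨t, ht⟩)
      rw [← himg, Set.ncard_image_of_injective _ hFinj]
    rw [← hsumℓ, ← hsumφ, ← hcard]
    exact h
  -- split sums
  have hsplitA : ∑ t : Fin N, φ₀ (fun i => (Y - A * X) i t)
      = ∑ t ∈ Ic, φ₀ (fun i => (Y - A * X) i t) := by
    rw [← Finset.sum_add_sum_compl Ic]
    have : ∑ t ∈ Icᶜ, φ₀ (fun i => (Y - A * X) i t) = 0 := by
      apply Finset.sum_eq_zero
      intro t ht
      rw [hcolA0 t (Finset.mem_compl.mp ht), hφ0]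
    rw [this, add_zero]
  have hsplitH : ∑ t : Fin N, φ₀ (fun i => (Y - H * X) i t)
      = (∑ t ∈ Ic, φ₀ (fun i => (Y - H * X) i t)) + ∑ t ∈ Icᶜ, g t := by
    rw [← Finset.sum_add_sum_compl Ic]
    congr 1
    apply Finset.sum_congr rfl
    intro t ht
    rw [hcolΛ t, hcolA0 t (Finset.mem_compl.mp ht), zero_add]
  -- hP2 on Ic
  have hIcineq : ∑ t ∈ Ic, φ₀ (fun i => (Y - A * X) i t)
      ≤ (∑ t ∈ Ic, φ₀ (fun i => (Y - H * X) i t)) + ∑ t ∈ Ic, f t := by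
    rw [← Finset.sum_add_distrib]
    apply Finset.sum_le_sum
    intro t _
    have h := hP2 (fun i => (Y - A * X) i t) (-(fun i => (Λ * X) i t))
    rw [sub_neg_eq_add, map_neg_eq_map, ← hcolΛ t] at h
    exact h
  have hc := hcond Λ hΛne
  rw [hsplitA, hsplitH]
  calc ∑ t ∈ Ic, φ₀ (fun i => (Y - A * X) i t)
      ≤ (∑ t ∈ Ic, φ₀ (fun i => (Y - H * X) i t)) + ∑ t ∈ Ic, f t := hIcineq
    _ < (∑ t ∈ Ic, φ₀ (fun i => (Y - H * X) i t)) + ∑ t ∈ Icᶜ, g t := by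
        have : ∑ t ∈ Ic, f t < ∑ t ∈ Icᶜ, g t := by
          have := hc
          simp only [hf] at key ⊢
          linarith [key]
        linarith
end

section
/- Let (φ₀, ℓ₀, ε) be as in the context. Suppose Y = A⁰X + E + F with the notation of the context, let S⁰ ⊆ {1,…,N} satisfy f_t = 0 for all t ∈ S⁰, and set Sᶜ = {1,…,N} \ S⁰. Then for every A* minimizing A ↦ Σ_{t=1}^N φ₀(y_t − A x_t) over ℝ^{m×n}, writing Λ* = A* − A⁰, one has Σ_{t∈S⁰} ℓ₀(Λ* x_t) − Σ_{t∈Sᶜ} ℓ₀(Λ* x_t) ≤ 2·Σ_{t∈S⁰} ℓ₀(e_t) + ε·#{t ∈ S⁰ : ℓ₀(y_t − A* x_t) > ε}. -/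
lemma auxlb {m : ℕ} (ℓ₀ : Seminorm ℝ (Fin m → ℝ)) (ε : ℝ) (φ₀ : (Fin m → ℝ) → ℝ)
    (hP3 : ∀ (k : ℕ) (b : Fin k → Fin m → ℝ),
      ((∑ i : Fin k, ℓ₀ (b i)) - ε * ({i : Fin k | ε < ℓ₀ (b i)}.ncard : ℝ) ≤
          ∑ i : Fin k, φ₀ (b i)) ∧
        ∑ i : Fin k, φ₀ (b i) ≤ ∑ i : Fin k, ℓ₀ (b i))
    {N : ℕ} (S : Finset (Fin N)) (r : Fin N → Fin m → ℝ) :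
    (∑ t ∈ S, ℓ₀ (r t)) - ε * ({t : Fin N | t ∈ S ∧ ε < ℓ₀ (r t)}.ncard : ℝ) ≤
      ∑ t ∈ S, φ₀ (r t) := by
  set k := S.card with hk
  set e := S.orderIsoOfFin hk.symm with he
  set b : Fin k → Fin m → ℝ := fun i => r (e i) with hb
  have hsum : ∀ f : (Fin m → ℝ) → ℝ, ∑ i : Fin k, f (b i) = ∑ t ∈ S, f (r t) := by
    intro f
    rw [← Finset.sum_coe_sort S (fun t => f (r t))]
    exact Fintype.sum_equiv e.toEquiv _ _ (fun i => rfl)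
  have hcard : {i : Fin k | ε < ℓ₀ (b i)}.ncard =
      {t : Fin N | t ∈ S ∧ ε < ℓ₀ (r t)}.ncard := by
    have himg : {t : Fin N | t ∈ S ∧ ε < ℓ₀ (r t)} =
        (fun i : Fin k => (e i : Fin N)) '' {i : Fin k | ε < ℓ₀ (b i)} := by
      ext t
      constructor
      · rintro ⟨ht, hlt⟩
        refine ⟨e.symm ⟨t, ht⟩, ?_, ?_⟩
        · simp [hb, Set.mem_setOf_eq]; simpa using hlt
        · simp
      · rintro ⟨i, hi, rfl⟩
        exact ⟨(e i).2, hi⟩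
    rw [himg, Set.ncard_image_of_injective _ (fun i j h => e.injective (Subtype.ext h))]
  have := (hP3 k b).1
  rw [hsum ℓ₀, hsum φ₀, hcard] at this
  exact this

theorem statement5 {m n N : ℕ} (ℓ₀ : Seminorm ℝ (Fin m → ℝ))
    (hℓdef : ∀ v : Fin m → ℝ, ℓ₀ v = 0 → v = 0)
    (ε : ℝ) (hε : 0 ≤ ε) (φ₀ : (Fin m → ℝ) → ℝ)
    (hconv : ConvexOn ℝ Set.univ φ₀) (hpos : ∀ b, 0 ≤ φ₀ b)
    (hP2 : ∀ b c : Fin m → ℝ, φ₀ b ≤ φ₀ (b - c) + ℓ₀ c)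
    (hP3 : ∀ (k : ℕ) (b : Fin k → Fin m → ℝ),
      ((∑ i : Fin k, ℓ₀ (b i)) - ε * ({i : Fin k | ε < ℓ₀ (b i)}.ncard : ℝ) ≤
          ∑ i : Fin k, φ₀ (b i)) ∧
        ∑ i : Fin k, φ₀ (b i) ≤ ∑ i : Fin k, ℓ₀ (b i))
    (Y : Matrix (Fin m) (Fin N) ℝ) (X : Matrix (Fin n) (Fin N) ℝ)
    (A₀ : Matrix (Fin m) (Fin n) ℝ) (E F : Matrix (Fin m) (Fin N) ℝ)
    (hdata : Y = A₀ * X + E + F)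
    (S₀ : Finset (Fin N)) (hF : ∀ t ∈ S₀, (fun i => F i t) = (0 : Fin m → ℝ)) :
    ∀ Astar : Matrix (Fin m) (Fin n) ℝ,
      (∀ A : Matrix (Fin m) (Fin n) ℝ,
        ∑ t : Fin N, φ₀ (fun i => (Y - Astar * X) i t) ≤
          ∑ t : Fin N, φ₀ (fun i => (Y - A * X) i t)) →
      (∑ t ∈ S₀, ℓ₀ (fun i => ((Astar - A₀) * X) i t)) -
          ∑ t ∈ S₀ᶜ, ℓ₀ (fun i => ((Astar - A₀) * X) i t) ≤
        2 * ∑ t ∈ S₀, ℓ₀ (fun i => E i t) +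
          ε * ({t : Fin N | t ∈ S₀ ∧ ε < ℓ₀ (fun i => (Y - Astar * X) i t)}.ncard : ℝ) := by
  intro Astar hmin
  -- column notations
  set r : Fin N → Fin m → ℝ := fun t => fun i => (Y - Astar * X) i t with hr
  set w : Fin N → Fin m → ℝ := fun t => fun i => ((Astar - A₀) * X) i t with hw
  set ee : Fin N → Fin m → ℝ := fun t => fun i => E i t with hee
  set ff : Fin N → Fin m → ℝ := fun t => fun i => F i t with hff
  have hsingle : ∀ b : Fin m → ℝ, φ₀ b ≤ ℓ₀ b := by
    intro b
    have := (hP3 1 (fun _ => b)).2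
    simpa using this
  have hrdecomp : ∀ t, r t = ee t + ff t - w t := by
    intro t
    funext i
    simp only [hr, hw, hee, hff, hdata, Matrix.sub_apply, Matrix.add_apply, Matrix.sub_mul,
      Pi.add_apply, Pi.sub_apply]
    ring
  have hrS : ∀ t ∈ S₀, r t = ee t - w t := by
    intro t ht
    have hft : ff t = 0 := hF t ht
    rw [hrdecomp t, hft]
    abel
  -- the minimality at A₀
  have hmin0 := hmin A₀
  have hYA₀ : ∀ t, (fun i => (Y - A₀ * X) i t) = ee t + ff t := by
    intro t
    funext i
    simp only [hdata, Matrix.sub_apply, Matrix.add_apply, hee, hff, Pi.add_apply]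
    ring
  simp only [hYA₀] at hmin0
  -- (A): lower bound on S₀
  have hA : (∑ t ∈ S₀, ℓ₀ (w t)) - ∑ t ∈ S₀, ℓ₀ (ee t)
      - ε * ({t : Fin N | t ∈ S₀ ∧ ε < ℓ₀ (r t)}.ncard : ℝ) ≤ ∑ t ∈ S₀, φ₀ (r t) := by
    have h1 := auxlb ℓ₀ ε φ₀ hP3 S₀ r
    have h2 : ∑ t ∈ S₀, ℓ₀ (w t) - ∑ t ∈ S₀, ℓ₀ (ee t) ≤ ∑ t ∈ S₀, ℓ₀ (r t) := by
      rw [← Finset.sum_sub_distrib]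
      apply Finset.sum_le_sum
      intro t ht
      have hwt : w t = ee t - r t := by rw [hrS t ht]; abel
      have h3 : ℓ₀ (w t) ≤ ℓ₀ (w t - ee t) + ℓ₀ (ee t) := by
        have := map_add_le_add ℓ₀ (w t - ee t) (ee t)
        simpa using this
      have h4 : ℓ₀ (w t - ee t) = ℓ₀ (r t) := by
        have hx : w t - ee t = -(r t) := by rw [hwt]; abel
        rw [hx, map_neg_eq_map]
      linarith
    linarith
  -- (B): lower bound on S₀ᶜ
  have hB : ∀ t ∈ S₀ᶜ, φ₀ (ee t + ff t) - ℓ₀ (w t) ≤ φ₀ (r t) := by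
    intro t _
    have := hP2 (ee t + ff t) (w t)
    have hsub : ee t + ff t - w t = r t := (hrdecomp t).symm
    rw [hsub] at this
    linarith
  have hBsum : (∑ t ∈ S₀ᶜ, φ₀ (ee t + ff t)) - ∑ t ∈ S₀ᶜ, ℓ₀ (w t) ≤ ∑ t ∈ S₀ᶜ, φ₀ (r t) := by
    rw [← Finset.sum_sub_distrib]
    exact Finset.sum_le_sum hB
  -- split total sums
  have hsplitr : ∑ t : Fin N, φ₀ (r t) = (∑ t ∈ S₀, φ₀ (r t)) + ∑ t ∈ S₀ᶜ, φ₀ (r t) :=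
    (Finset.sum_add_sum_compl S₀ _).symm
  have hsplitef : ∑ t : Fin N, φ₀ (ee t + ff t)
      = (∑ t ∈ S₀, φ₀ (ee t + ff t)) + ∑ t ∈ S₀ᶜ, φ₀ (ee t + ff t) :=
    (Finset.sum_add_sum_compl S₀ _).symm
  have hS₀ef : ∑ t ∈ S₀, φ₀ (ee t + ff t) ≤ ∑ t ∈ S₀, ℓ₀ (ee t) := by
    apply Finset.sum_le_sum
    intro t ht
    have hft : ff t = 0 := hF t ht
    have : ee t + ff t = ee t := by rw [hft]; abel
    rw [this]
    exact hsingle _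
  linarith
end

section
/- Let φ₀ be a norm on ℝ^m and define φ(B) = Σᵢ φ₀(bᵢ) for a matrix B with columns bᵢ. Assume X ∈ ℝ^{n×N} is self-decomposable. Then for every k ∈ {1,…,N} and every Λ ∈ ℝ^{m×n}, φ₀(Λ x_k) ≤ ξ(X)·(φ(ΛX) − φ₀(Λ x_k)); equivalently, φ₀(Λ x_k) ≤ [ξ(X)/(1 + ξ(X))]·φ(ΛX). -/
theorem statement8 {m n N : ℕ} (φ₀ : Seminorm ℝ (Fin m → ℝ))
    (hφdef : ∀ v : Fin m → ℝ, φ₀ v = 0 → v = 0)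
    (X : Matrix (Fin n) (Fin N) ℝ) (hX : SelfDecomposable X) :
    ∀ (k : Fin N) (Λ : Matrix (Fin m) (Fin n) ℝ),
      φ₀ (fun i => (Λ * X) i k) ≤
          xi X * ((∑ t : Fin N, φ₀ (fun i => (Λ * X) i t)) - φ₀ (fun i => (Λ * X) i k)) ∧
        φ₀ (fun i => (Λ * X) i k) ≤
          (xi X / (1 + xi X)) * ∑ t : Fin N, φ₀ (fun i => (Λ * X) i t) := by
  intro k Λ
  haveI : Nonempty (Fin N) := ⟨k⟩
  set v : Fin N → (Fin m → ℝ) := fun t => (fun i => (Λ * X) i t) with hv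
  set S : ℝ := ∑ t : Fin N, φ₀ (v t) with hS
  set A : Fin N → Set ℝ := fun j => {c : ℝ | ∃ γ : Fin N → ℝ, γ j = 0 ∧
    (∀ i, X i j = ∑ t : Fin N, γ t * X i t) ∧ c = ⨆ t : Fin N, |γ t|} with hA
  have hAne : ∀ j, (A j).Nonempty := by
    intro j
    obtain ⟨γ, h0, hγ⟩ := hX.2 j
    exact ⟨_, γ, h0, hγ, rfl⟩
  have hAnneg : ∀ j, ∀ c ∈ A j, 0 ≤ c := by
    rintro j c ⟨γ, h0, hγ, rfl⟩
    have : |γ j| ≤ ⨆ t : Fin N, |γ t| :=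
      le_ciSup (f := fun t => |γ t|) (Set.Finite.bddAbove (Set.finite_range _)) j
    exact le_trans (abs_nonneg _) this
  have hAbdd : ∀ j, BddBelow (A j) := fun j => ⟨0, fun c hc => hAnneg j c hc⟩
  -- key estimate for each c in A k
  have hkey : ∀ c ∈ A k, φ₀ (v k) ≤ c * (S - φ₀ (v k)) := by
    rintro c ⟨γ, h0, hγ, rfl⟩
    have hvk : v k = ∑ t : Fin N, γ t • v t := by
      funext i
      simp only [hv, Matrix.mul_apply, Finset.sum_apply, Pi.smul_apply, smul_eq_mul]
      calc ∑ j, Λ i j * X j k = ∑ j, Λ i j * ∑ t : Fin N, γ t * X j t := by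
            simp_rw [← hγ]
        _ = ∑ t : Fin N, γ t * ∑ j, Λ i j * X j t := by
            simp_rw [Finset.mul_sum]
            rw [Finset.sum_comm]
            congr 1; funext t
            congr 1; funext j
            ring
    have h1 : φ₀ (v k) ≤ ∑ t : Fin N, φ₀ (γ t • v t) := by
      rw [hvk]
      exact Finset.le_sum_of_subadditive (f := fun x => φ₀ x) (map_zero φ₀).le
        (fun a b => map_add_le_add φ₀ a b) _ _
    have h2 : ∀ t : Fin N, φ₀ (γ t • v t) = |γ t| * φ₀ (v t) := by
      intro t
      rw [map_smul_eq_mul]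
      simp [Real.norm_eq_abs]
    have hc : ∀ t : Fin N, |γ t| ≤ ⨆ t : Fin N, |γ t| := fun t =>
      le_ciSup (f := fun t => |γ t|) (Set.Finite.bddAbove (Set.finite_range _)) t
    have h3 : φ₀ (v k) ≤ ∑ t ∈ Finset.univ.erase k, |γ t| * φ₀ (v t) := by
      refine h1.trans ?_
      rw [← Finset.add_sum_erase _ _ (Finset.mem_univ k)]
      simp only [h2]
      simp [h0]
    have h4 : ∑ t ∈ Finset.univ.erase k, |γ t| * φ₀ (v t)
        ≤ (⨆ t : Fin N, |γ t|) * ∑ t ∈ Finset.univ.erase k, φ₀ (v t) := by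
      rw [Finset.mul_sum]
      exact Finset.sum_le_sum fun t _ =>
        mul_le_mul_of_nonneg_right (hc t) (apply_nonneg φ₀ _)
    have h5 : ∑ t ∈ Finset.univ.erase k, φ₀ (v t) = S - φ₀ (v k) := by
      rw [hS, ← Finset.add_sum_erase _ _ (Finset.mem_univ k)]
      ring
    rw [← h5]
    exact h3.trans h4
  set a : ℝ := S - φ₀ (v k) with ha
  have hanneg : 0 ≤ a := by
    have h5 : ∑ t ∈ Finset.univ.erase k, φ₀ (v t) = S - φ₀ (v k) := by
      rw [hS, ← Finset.add_sum_erase _ _ (Finset.mem_univ k)]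
      ring
    rw [ha, ← h5]
    exact Finset.sum_nonneg fun t _ => apply_nonneg φ₀ _
  -- pass to the infimum
  have hinf : φ₀ (v k) ≤ sInf (A k) * a := by
    rcases eq_or_lt_of_le hanneg with hz | hpos
    · obtain ⟨c, hc⟩ := hAne k
      have := hkey c hc
      rw [← hz] at this ⊢
      simp only [mul_zero] at this ⊢
      exact this
    · rw [← div_le_iff₀ hpos]
      refine le_csInf (hAne k) fun c hc => ?_
      rw [div_le_iff₀ hpos]
      exact hkey c hc
  have hbddsup : BddAbove (Set.range fun j : Fin N => sInf (A j)) :=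
    Set.Finite.bddAbove (Set.finite_range _)
  have hinfle : sInf (A k) ≤ xi X := le_ciSup hbddsup k
  have hinfnneg : ∀ j, 0 ≤ sInf (A j) := fun j =>
    le_csInf (hAne j) fun c hc => hAnneg j c hc
  have hxinneg : 0 ≤ xi X := le_trans (hinfnneg k) hinfle
  have hfirst : φ₀ (v k) ≤ xi X * a :=
    hinf.trans (mul_le_mul_of_nonneg_right hinfle hanneg)
  refine ⟨hfirst, ?_⟩
  have hpos1 : (0:ℝ) < 1 + xi X := by linarith
  rw [div_mul_eq_mul_div, le_div_iff₀ hpos1]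
  have : φ₀ (v k) ≤ xi X * (S - φ₀ (v k)) := hfirst
  nlinarith [apply_nonneg φ₀ (v k)]
end

section
/- Let φ₀ be a norm on ℝ^m and define φ(B) = Σᵢ φ₀(bᵢ) for a matrix B with columns bᵢ. Assume X ∈ ℝ^{n×N} is self-decomposable. Then for every index set Iᶜ ⊆ {1,…,N} and every Λ ∈ ℝ^{m×n}, one has φ(ΛX_{Iᶜ}) ≤ [|Iᶜ| / (2·T(ξ(X)))] · φ(ΛX), where φ(ΛX_{Iᶜ}) = Σ_{t∈Iᶜ} φ₀(Λ x_t). -/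
lemma seminorm_sum_le {m : ℕ} (φ₀ : Seminorm ℝ (Fin m → ℝ)) {ι : Type*} (s : Finset ι)
    (f : ι → (Fin m → ℝ)) : φ₀ (∑ t ∈ s, f t) ≤ ∑ t ∈ s, φ₀ (f t) := by
  classical
  induction s using Finset.induction with
  | empty => simp
  | @insert a s h ih =>
    rw [Finset.sum_insert h, Finset.sum_insert h]
    exact le_trans (map_add_le_add φ₀ _ _) (by linarith)

theorem statement9 {m n N : ℕ} (φ₀ : Seminorm ℝ (Fin m → ℝ))
    (hφdef : ∀ v : Fin m → ℝ, φ₀ v = 0 → v = 0)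
    (X : Matrix (Fin n) (Fin N) ℝ) (hX : SelfDecomposable X) :
    ∀ (Ic : Finset (Fin N)) (Λ : Matrix (Fin m) (Fin n) ℝ),
      ∑ t ∈ Ic, φ₀ (fun i => (Λ * X) i t) ≤
        ((Ic.card : ℝ) / (2 * Tfun (xi X))) * ∑ t : Fin N, φ₀ (fun i => (Λ * X) i t) := by
  intro Ic Λ
  classical
  rcases Ic.eq_empty_or_nonempty with rfl | ⟨k₀, hk₀⟩
  · simp
  have hN : Nonempty (Fin N) := ⟨k₀⟩
  set col : Fin N → (Fin m → ℝ) := fun t => fun i => (Λ * X) i t with hcol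
  set S : ℝ := ∑ t : Fin N, φ₀ (col t) with hS
  have hS0 : 0 ≤ S := Finset.sum_nonneg fun t _ => apply_nonneg φ₀ _
  -- ξ ≥ 0
  have hset : ∀ k : Fin N, ∀ c ∈ {c : ℝ | ∃ γ : Fin N → ℝ, γ k = 0 ∧
      (∀ i, X i k = ∑ t : Fin N, γ t * X i t) ∧ c = ⨆ t : Fin N, |γ t|}, 0 ≤ c := by
    rintro k c ⟨γ, hγk, hdec, rfl⟩
    exact le_trans (abs_nonneg (γ k₀))
      (le_ciSup (f := fun t => |γ t|) (Set.Finite.bddAbove (Set.finite_range _)) k₀)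
  have hne : ∀ k : Fin N, Set.Nonempty {c : ℝ | ∃ γ : Fin N → ℝ, γ k = 0 ∧
      (∀ i, X i k = ∑ t : Fin N, γ t * X i t) ∧ c = ⨆ t : Fin N, |γ t|} := by
    intro k
    obtain ⟨γ, hγk, hdec⟩ := hX.2 k
    exact ⟨_, γ, hγk, hdec, rfl⟩
  have hxi0 : 0 ≤ xi X := by
    apply Real.iSup_nonneg
    intro k
    exact Real.sInf_nonneg (hset k)
  have hinf_le : ∀ k : Fin N, sInf {c : ℝ | ∃ γ : Fin N → ℝ, γ k = 0 ∧
      (∀ i, X i k = ∑ t : Fin N, γ t * X i t) ∧ c = ⨆ t : Fin N, |γ t|} ≤ xi X := by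
    intro k
    unfold xi
    exact le_ciSup (f := fun k : Fin N => sInf {c : ℝ | ∃ γ : Fin N → ℝ, γ k = 0 ∧
      (∀ i, X i k = ∑ t : Fin N, γ t * X i t) ∧ c = ⨆ t : Fin N, |γ t|})
      (Set.Finite.bddAbove (Set.finite_range _)) k
  -- key bound for each column
  have key : ∀ k : Fin N, (1 + xi X) * φ₀ (col k) ≤ xi X * S := by
    intro k
    -- show φ₀ (col k) ≤ (xi X + ε) * (S - φ₀ (col k)) for all ε > 0
    have hM : 0 ≤ S - φ₀ (col k) := by
      have : φ₀ (col k) ≤ S :=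
        Finset.single_le_sum (f := fun t => φ₀ (col t))
          (fun t _ => apply_nonneg φ₀ _) (Finset.mem_univ k)
      linarith
    have step : ∀ ε : ℝ, 0 < ε → φ₀ (col k) ≤ (xi X + ε) * (S - φ₀ (col k)) := by
      intro ε hε
      obtain ⟨c, hc, hclt⟩ := exists_lt_of_csInf_lt (hne k)
        (lt_of_le_of_lt (hinf_le k) (by linarith : xi X < xi X + ε))
      obtain ⟨γ, hγk, hdec, rfl⟩ := hc
      have hγle : ∀ t, |γ t| ≤ ⨆ t : Fin N, |γ t| :=
        fun t => le_ciSup (f := fun t => |γ t|) (Set.Finite.bddAbove (Set.finite_range _)) t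
      -- col k = ∑ t, γ t • col t
      have hcolk : col k = ∑ t : Fin N, γ t • col t := by
        funext i
        simp only [hcol, Matrix.mul_apply, Finset.sum_apply, Pi.smul_apply, smul_eq_mul]
        calc ∑ j, Λ i j * X j k = ∑ j, Λ i j * ∑ t, γ t * X j t := by
              refine Finset.sum_congr rfl fun j _ => by rw [hdec j]
          _ = ∑ j, ∑ t, γ t * (Λ i j * X j t) := by
              refine Finset.sum_congr rfl fun j _ => by
                rw [Finset.mul_sum]
                exact Finset.sum_congr rfl fun t _ => by ring
          _ = ∑ t, γ t * ∑ j, Λ i j * X j t := by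
              rw [Finset.sum_comm]
              exact Finset.sum_congr rfl fun t _ => by rw [Finset.mul_sum]
      have h1 : φ₀ (col k) ≤ ∑ t : Fin N, |γ t| * φ₀ (col t) := by
        rw [hcolk]
        refine le_trans (seminorm_sum_le φ₀ _ _) ?_
        refine Finset.sum_le_sum fun t _ => ?_
        rw [map_smul_eq_mul]
        exact le_of_eq (by rw [Real.norm_eq_abs])
      have h2 : ∑ t : Fin N, |γ t| * φ₀ (col t) ≤
          (⨆ t : Fin N, |γ t|) * (S - φ₀ (col k)) := by
        have : ∑ t : Fin N, |γ t| * φ₀ (col t)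
            = ∑ t ∈ Finset.univ.erase k, |γ t| * φ₀ (col t) := by
          rw [Finset.sum_erase_eq_sub (Finset.mem_univ k), hγk]
          simp
        rw [this]
        have hSsub : S - φ₀ (col k) = ∑ t ∈ Finset.univ.erase k, φ₀ (col t) := by
          rw [Finset.sum_erase_eq_sub (Finset.mem_univ k), hS]
        rw [hSsub, Finset.mul_sum]
        refine Finset.sum_le_sum fun t _ => ?_
        exact mul_le_mul_of_nonneg_right (hγle t) (apply_nonneg φ₀ _)
      have h3 : (⨆ t : Fin N, |γ t|) * (S - φ₀ (col k)) ≤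
          (xi X + ε) * (S - φ₀ (col k)) :=
        mul_le_mul_of_nonneg_right (le_of_lt hclt) hM
      linarith
    -- take ε → 0
    have hlim : φ₀ (col k) ≤ xi X * (S - φ₀ (col k)) := by
      by_contra hcon
      push_neg at hcon
      set M := S - φ₀ (col k)
      have hδ : 0 < φ₀ (col k) - xi X * M := by linarith
      have := step ((φ₀ (col k) - xi X * M) / (M + 1)) (by positivity)
      have hM1 : 0 < M + 1 := by linarith
      rw [add_mul, div_mul_eq_mul_div] at this
      have : φ₀ (col k) ≤ xi X * M + (φ₀ (col k) - xi X * M) * M / (M + 1) := this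
      have hfrac : (φ₀ (col k) - xi X * M) * M / (M + 1) < φ₀ (col k) - xi X * M := by
        rw [div_lt_iff₀ hM1]
        nlinarith
      linarith
    nlinarith [apply_nonneg φ₀ (col k)]
  -- conclude
  have h2T : 0 < 2 * Tfun (xi X) := by
    rcases eq_or_lt_of_le hxi0 with h | h
    · simp [Tfun, ← h]
    · have : 0 < 1 / xi X := by positivity
      simp only [Tfun]; nlinarith
  have hterm : ∀ k : Fin N, φ₀ (col k) ≤ S / (2 * Tfun (xi X)) := by
    intro k
    rcases eq_or_lt_of_le hxi0 with h | h
    · have := key k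
      rw [← h] at this
      simp only [zero_mul] at this
      have h0 : φ₀ (col k) = 0 := le_antisymm (by linarith) (apply_nonneg φ₀ _)
      rw [h0]
      positivity
    · rw [le_div_iff₀ h2T]
      have h2Teq : 2 * Tfun (xi X) = (1 + xi X) / xi X := by
        simp only [Tfun]; field_simp; ring
      rw [h2Teq, mul_div_assoc', div_le_iff₀ h]
      calc φ₀ (col k) * (1 + xi X) = (1 + xi X) * φ₀ (col k) := by ring
        _ ≤ xi X * S := key k
        _ = S * xi X := by ring
  calc ∑ t ∈ Ic, φ₀ (col t) ≤ ∑ _t ∈ Ic, S / (2 * Tfun (xi X)) :=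
        Finset.sum_le_sum fun t _ => hterm t
    _ = (Ic.card : ℝ) * (S / (2 * Tfun (xi X))) := by
        rw [Finset.sum_const, nsmul_eq_mul]
    _ = ((Ic.card : ℝ) / (2 * Tfun (xi X))) * S := by ring
end

section
/- Let X ∈ ℝ^{n×N} be self-decomposable with n ≥ 1 and N ≥ 2. Then ξ(X) ≥ 1/(N−1). -/
theorem statement12 {n N : ℕ} (hn : 1 ≤ n) (hN : 2 ≤ N)
    (X : Matrix (Fin n) (Fin N) ℝ) (hX : SelfDecomposable X) :
    1 / ((N : ℝ) - 1) ≤ xi X := by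
  have hNpos : (0 : ℝ) < (N : ℝ) - 1 := by
    have : (2 : ℝ) ≤ (N : ℝ) := by exact_mod_cast hN
    linarith
  haveI : Nonempty (Fin N) := ⟨⟨0, by omega⟩⟩
  haveI : Nonempty (Fin n) := ⟨⟨0, by omega⟩⟩
  -- X is nonzero
  have hXne : ∃ i j, X i j ≠ 0 := by
    by_contra h
    push_neg at h
    have hz : X = 0 := by ext i j; exact h i j
    have := hX.1
    rw [hz] at this
    simp [Matrix.rank_zero] at this
    omega
  obtain ⟨i, j, hij⟩ := hXne
  -- pick k maximizing |X i ·|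
  obtain ⟨k, _, hk⟩ := Finset.exists_max_image Finset.univ (fun t => |X i t|)
    ⟨j, Finset.mem_univ j⟩
  have hkmax : ∀ t : Fin N, |X i t| ≤ |X i k| := fun t => hk t (Finset.mem_univ t)
  have hkpos : 0 < |X i k| := lt_of_lt_of_le (abs_pos.mpr hij) (hkmax j)
  -- the infimum for this k is at least the bound
  set S := {c : ℝ | ∃ γ : Fin N → ℝ, γ k = 0 ∧
      (∀ i, X i k = ∑ t : Fin N, γ t * X i t) ∧ c = ⨆ t : Fin N, |γ t|} with hS
  have hSne : S.Nonempty := by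
    obtain ⟨γ, h1, h2⟩ := hX.2 k
    exact ⟨⨆ t : Fin N, |γ t|, γ, h1, h2, rfl⟩
  have hbound : ∀ c ∈ S, 1 / ((N : ℝ) - 1) ≤ c := by
    rintro c ⟨γ, hγ1, hγ2, rfl⟩
    set c := ⨆ t : Fin N, |γ t| with hc
    have hγle : ∀ t, |γ t| ≤ c := by
      intro t; rw [hc]
      exact le_ciSup (Set.finite_range fun t => |γ t|).bddAbove t
    have hc0 : 0 ≤ c := le_trans (abs_nonneg (γ k)) (hγle k)
    have key : |X i k| ≤ ((N : ℝ) - 1) * (c * |X i k|) := by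
      calc |X i k| = |∑ t : Fin N, γ t * X i t| := by rw [← hγ2 i]
        _ = |∑ t ∈ Finset.univ.erase k, γ t * X i t| := by
            rw [Finset.sum_erase _ (by simp [hγ1])]
        _ ≤ ∑ t ∈ Finset.univ.erase k, |γ t * X i t| :=
            Finset.abs_sum_le_sum_abs _ _
        _ ≤ ∑ t ∈ Finset.univ.erase k, c * |X i k| := by
            refine Finset.sum_le_sum fun t _ => ?_
            rw [abs_mul]
            exact mul_le_mul (hγle t) (hkmax t) (abs_nonneg _) hc0
        _ = ((Finset.univ.erase k).card : ℝ) * (c * |X i k|) := by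
            rw [Finset.sum_const, nsmul_eq_mul]
        _ = ((N : ℝ) - 1) * (c * |X i k|) := by
            rw [Finset.card_erase_of_mem (Finset.mem_univ k)]
            simp only [Finset.card_univ, Fintype.card_fin]
            rw [Nat.cast_sub (by omega)]
            norm_num
    have h1 : (1 : ℝ) ≤ ((N : ℝ) - 1) * c := by
      nlinarith
    rw [div_le_iff₀ hNpos]
    linarith
  have hInf : 1 / ((N : ℝ) - 1) ≤ sInf S := le_csInf hSne hbound
  refine le_trans hInf ?_
  exact le_ciSup (f := fun k : Fin N => sInf {c : ℝ | ∃ γ : Fin N → ℝ, γ k = 0 ∧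
      (∀ i, X i k = ∑ t : Fin N, γ t * X i t) ∧ c = ⨆ t : Fin N, |γ t|})
    (Set.finite_range _).bddAbove k
end

section
/- Let φ₀ be a norm on ℝ^m and define φ(B) = Σᵢ φ₀(bᵢ) for a matrix B with columns bᵢ. Suppose Y = A⁰X + F with Y ∈ ℝ^{m×N}, X ∈ ℝ^{n×N}, A⁰ ∈ ℝ^{m×n}, F ∈ ℝ^{m×N} (i.e., the dense noise E is identically zero). Let S⁰ ⊆ {1,…,N} satisfy f_t = 0 for all t ∈ S⁰, set Sᶜ = {1,…,N} \ S⁰, and let ‖·‖ be a norm on ℝ^{m×n}. If there exists α > 0 such that Σ_{t∈S⁰} φ₀(Λ x_t) − Σ_{t∈Sᶜ} φ₀(Λ x_t) ≥ α·‖Λ‖ for all Λ ∈ ℝ^{m×n}, then A⁰ is the unique minimizer of A ↦ φ(Y − AX) over ℝ^{m×n}, i.e., φ(Y − A⁰X) < φ(Y − AX) for every A ≠ A⁰. -/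
theorem statement15 {m n N : ℕ} (φ₀ : Seminorm ℝ (Fin m → ℝ))
    (hφdef : ∀ v : Fin m → ℝ, φ₀ v = 0 → v = 0)
    (Y : Matrix (Fin m) (Fin N) ℝ) (X : Matrix (Fin n) (Fin N) ℝ)
    (A₀ : Matrix (Fin m) (Fin n) ℝ) (F : Matrix (Fin m) (Fin N) ℝ)
    (hdata : Y = A₀ * X + F)
    (S₀ : Finset (Fin N)) (hF : ∀ t ∈ S₀, (fun i => F i t) = (0 : Fin m → ℝ))
    (nq : Seminorm ℝ (Matrix (Fin m) (Fin n) ℝ))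
    (hnqdef : ∀ Λ : Matrix (Fin m) (Fin n) ℝ, nq Λ = 0 → Λ = 0)
    (α : ℝ) (hα : 0 < α)
    (hgap : ∀ Λ : Matrix (Fin m) (Fin n) ℝ,
      α * nq Λ ≤ (∑ t ∈ S₀, φ₀ (fun i => (Λ * X) i t)) -
        ∑ t ∈ S₀ᶜ, φ₀ (fun i => (Λ * X) i t)) :
    ∀ A : Matrix (Fin m) (Fin n) ℝ, A ≠ A₀ →
      ∑ t : Fin N, φ₀ (fun i => (Y - A₀ * X) i t) <
        ∑ t : Fin N, φ₀ (fun i => (Y - A * X) i t) := by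
  intro A hA
  set Λ := A₀ - A with hΛ
  have hΛne : Λ ≠ 0 := sub_ne_zero.mpr (Ne.symm hA)
  have hnqpos : 0 < nq Λ :=
    lt_of_le_of_ne (apply_nonneg nq Λ) fun h => hΛne (hnqdef Λ h.symm)
  have hY0 : ∀ t, (fun i => (Y - A₀ * X) i t) = (fun i => F i t) := by
    intro t; funext i
    simp [hdata, Matrix.sub_apply, Matrix.add_apply]
  have hYA : ∀ t, (fun i => (Y - A * X) i t)
      = (fun i => F i t) + (fun i => (Λ * X) i t) := by
    intro t; funext i
    simp [hdata, hΛ, Matrix.sub_apply, Matrix.add_apply, Matrix.sub_mul]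
    ring
  -- LHS equals sum over complement of S₀
  have hLHS : ∑ t : Fin N, φ₀ (fun i => (Y - A₀ * X) i t)
      = ∑ t ∈ S₀ᶜ, φ₀ (fun i => F i t) := by
    rw [← Finset.sum_add_sum_compl S₀ (fun t => φ₀ (fun i => (Y - A₀ * X) i t))]
    have h1 : ∑ t ∈ S₀, φ₀ (fun i => (Y - A₀ * X) i t) = 0 := by
      apply Finset.sum_eq_zero
      intro t ht
      rw [hY0 t, hF t ht, map_zero]
    rw [h1, zero_add]
    exact Finset.sum_congr rfl fun t _ => by rw [hY0 t]
  have key : ∑ t ∈ S₀ᶜ, φ₀ (fun i => F i t) + α * nq Λ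
      ≤ ∑ t : Fin N, φ₀ (fun i => (Y - A * X) i t) := by
    rw [← Finset.sum_add_sum_compl S₀ (fun t => φ₀ (fun i => (Y - A * X) i t))]
    have hS : ∑ t ∈ S₀, φ₀ (fun i => (Y - A * X) i t)
        = ∑ t ∈ S₀, φ₀ (fun i => (Λ * X) i t) := by
      refine Finset.sum_congr rfl fun t ht => ?_
      rw [hYA t, hF t ht, zero_add]
    have hSc : ∑ t ∈ S₀ᶜ, (φ₀ (fun i => F i t) - φ₀ (fun i => (Λ * X) i t))
        ≤ ∑ t ∈ S₀ᶜ, φ₀ (fun i => (Y - A * X) i t) := by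
      refine Finset.sum_le_sum fun t _ => ?_
      rw [hYA t]
      have := map_sub_le_add φ₀ ((fun i => F i t) + (fun i => (Λ * X) i t))
        (fun i => (Λ * X) i t)
      simpa [sub_le_iff_le_add] using this
    rw [hS, Finset.sum_sub_distrib] at *
    have := hgap Λ
    linarith
  calc ∑ t : Fin N, φ₀ (fun i => (Y - A₀ * X) i t)
      = ∑ t ∈ S₀ᶜ, φ₀ (fun i => F i t) := hLHS
    _ < ∑ t ∈ S₀ᶜ, φ₀ (fun i => F i t) + α * nq Λ := by
        have := mul_pos hα hnqpos; linarith
    _ ≤ _ := key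
end
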